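/- For every partition Z of {1,…,N} and all x, y ∈ X₀: ⟨P_c(Z)x, P_c(Z)y⟩_m = (1/(2M)) Σ_{C′∈Z} Σ_{C″∈Z} M[C′] M[C″] ⟨x_c[C′] − x_c[C″], y_c[C′] − y_c[C″]⟩, where ⟨·,·⟩ is the standard inner product on ℝⁿ. -/
import Mathlib


/-! STATEMENT 12: inner product of intercluster (center-of-mass) projections. -/

open MeasureTheory Finset

open scoped RealInnerProductSpace

noncomputable section

/-- The one-particle space `ℝⁿ`. -/
abbrev Pt (n : ℕ) := EuclideanSpace ℝ (Fin n)

/-- The configuration space `X = (ℝⁿ)^N`. -/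
abbrev Conf (N n : ℕ) := Fin N → Pt n

/-- The mass inner product `⟨x,y⟩_m = ∑ i mᵢ ⟨xᵢ, yᵢ⟩`. -/
def minner {N n : ℕ} (mass : Fin N → ℝ) (x y : Conf N n) : ℝ :=
  ∑ i, mass i * ⟪x i, y i⟫

/-- The mass norm `|x|_m`. -/
def mnorm {N n : ℕ} (mass : Fin N → ℝ) (x : Conf N n) : ℝ :=
  Real.sqrt (minner mass x x)

/-- The space `X₀` of relative positions: `∑ i mᵢ xᵢ = 0`. -/
def X0 {N n : ℕ} (mass : Fin N → ℝ) : Set (Conf N n) :=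
  {x | ∑ i, mass i • x i = 0}

/-- Total mass `M[C]` of a cluster `C`. -/
def cmass {N : ℕ} (mass : Fin N → ℝ) (C : Finset (Fin N)) : ℝ := ∑ i ∈ C, mass i

/-- Center of mass `x_c[C]` of the cluster `C`. -/
def com {N n : ℕ} (mass : Fin N → ℝ) (C : Finset (Fin N)) (x : Conf N n) : Pt n :=
  (cmass mass C)⁻¹ • ∑ i ∈ C, mass i • x i

/-- The `⟨·,·⟩_m`-orthogonal projection `P₀[C]` of `X₀` onto `X₀[C]`:
explicitly, `(P₀[C]x)ᵢ = xᵢ − x_c[C]` for `i ∈ C` and `0` otherwise. -/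
def P0C {N n : ℕ} (mass : Fin N → ℝ) (C : Finset (Fin N)) (x : Conf N n) : Conf N n :=
  fun i => if i ∈ C then x i - com mass C x else 0

/-- A partition (cluster decomposition) of the `N`-particle system. -/
abbrev Partn (N : ℕ) := Finpartition (Finset.univ : Finset (Fin N))

/-- The `⟨·,·⟩_m`-orthogonal projection `P_c(Z)` of `X₀` onto `X_c(Z) = X₀ ⊖ X₀(Z)`:
explicitly, `(P_c(Z)x)ᵢ = x_c[C]` where `C` is the cluster of `Z` containing `i`. -/
def PcZ {N n : ℕ} (mass : Fin N → ℝ) (Z : Partn N) (x : Conf N n) : Conf N n :=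
  fun i => ∑ C ∈ Z.parts, if i ∈ C then com mass C x else 0

/-- The `⟨·,·⟩_m`-orthogonal projection `P₀(Z)` of `X₀` onto `X₀(Z) = ⊕_{C ∈ Z} X₀[C]`. -/
def P0Z {N n : ℕ} (mass : Fin N → ℝ) (Z : Partn N) (x : Conf N n) : Conf N n :=
  x - PcZ mass Z x

/-- The cone `K(Z,κ) = {x ∈ X₀ : |P₀(Z)x|_m ≤ κ|P_c(Z)x|_m}` for `|Z| > 1`;
for the trivial partition (`|Z| = 1`), `K(Z,κ) = {x ∈ X₀ : |x|_m ≤ κ}`. -/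
def cone {N n : ℕ} (mass : Fin N → ℝ) (Z : Partn N) (κ : ℝ) : Set (Conf N n) :=
  if 1 < Z.parts.card then
    {x ∈ X0 mass | mnorm mass (P0Z mass Z x) ≤ κ * mnorm mass (PcZ mass Z x)}
  else
    {x ∈ X0 mass | mnorm mass x ≤ κ}

variable {N n : ℕ}

lemma sum_parts_eq {α : Type*} [AddCommMonoid α] (Z : Partn N) (f : Fin N → α) :
    ∑ C ∈ Z.parts, ∑ i ∈ C, f i = ∑ i, f i := by
  conv_rhs => rw [show (Finset.univ : Finset (Fin N)) = Z.parts.biUnion id from Z.biUnion_parts.symm]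
  rw [Finset.sum_biUnion Z.supIndep.pairwiseDisjoint]
  rfl

lemma cmass_pos (mass : Fin N → ℝ) (hm : ∀ i, 0 < mass i) (Z : Partn N)
    {C : Finset (Fin N)} (hC : C ∈ Z.parts) : 0 < cmass mass C :=
  Finset.sum_pos (fun i _ => hm i) (Z.nonempty_of_mem_parts hC)

lemma sum_cmass_com (mass : Fin N → ℝ) (hm : ∀ i, 0 < mass i) (Z : Partn N)
    (x : Conf N n) (hx : x ∈ X0 mass) :
    ∑ C ∈ Z.parts, cmass mass C • com mass C x = 0 := by
  calc ∑ C ∈ Z.parts, cmass mass C • com mass C x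
      = ∑ C ∈ Z.parts, ∑ i ∈ C, mass i • x i := Finset.sum_congr rfl fun C hC => by
        rw [com, smul_smul, mul_inv_cancel₀ (cmass_pos mass hm Z hC).ne', one_smul]
    _ = ∑ i, mass i • x i := sum_parts_eq Z _
    _ = 0 := hx

theorem stmt_12 (N n : ℕ) (hN : 2 ≤ N) (hn : 1 ≤ n)
    (mass : Fin N → ℝ) (hm : ∀ i, 0 < mass i)
    (Z : Partn N)
    (x y : Conf N n) (hx : x ∈ X0 mass) (hy : y ∈ X0 mass) :
    minner mass (PcZ mass Z x) (PcZ mass Z y)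
      = (1 / (2 * ∑ i, mass i)) *
          ∑ C₁ ∈ Z.parts, ∑ C₂ ∈ Z.parts,
            cmass mass C₁ * cmass mass C₂ *
              ⟪com mass C₁ x - com mass C₂ x, com mass C₁ y - com mass C₂ y⟫ := by
  set a : Finset (Fin N) → Pt n := fun C => com mass C x with ha
  set b : Finset (Fin N) → Pt n := fun C => com mass C y with hb
  set w : Finset (Fin N) → ℝ := cmass mass with hw
  set M : ℝ := ∑ i, mass i with hM
  have hMpos : 0 < M := Finset.sum_pos (fun i _ => hm i) ⟨⟨0, by omega⟩, mem_univ _⟩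
  have hwM : ∑ C ∈ Z.parts, w C = M := by
    simpa [hw, cmass] using sum_parts_eq (α := ℝ) Z mass
  have hxa : ∑ C ∈ Z.parts, w C • a C = 0 := sum_cmass_com mass hm Z x hx
  have hyb : ∑ C ∈ Z.parts, w C • b C = 0 := sum_cmass_com mass hm Z y hy
  -- scalar annihilation lemmas
  have keyx : ∀ v : Pt n, ∑ C ∈ Z.parts, w C * ⟪a C, v⟫ = 0 := by
    intro v
    have : ∑ C ∈ Z.parts, w C * ⟪a C, v⟫ = ⟪∑ C ∈ Z.parts, w C • a C, v⟫ := by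
      rw [sum_inner]
      exact Finset.sum_congr rfl fun C _ => (real_inner_smul_left _ _ _).symm
    rw [this, hxa, inner_zero_left]
  have keyy : ∀ v : Pt n, ∑ C ∈ Z.parts, w C * ⟪v, b C⟫ = 0 := by
    intro v
    have : ∑ C ∈ Z.parts, w C * ⟪v, b C⟫ = ⟪v, ∑ C ∈ Z.parts, w C • b C⟫ := by
      rw [inner_sum]
      exact Finset.sum_congr rfl fun C _ => (real_inner_smul_right _ _ _).symm
    rw [this, hyb, inner_zero_right]
  set S : ℝ := ∑ C ∈ Z.parts, w C * ⟪a C, b C⟫ with hS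
  -- LHS = S
  have hLHS : minner mass (PcZ mass Z x) (PcZ mass Z y) = S := by
    rw [minner]
    have step : ∀ C ∈ Z.parts, ∀ i ∈ C,
        mass i * ⟪PcZ mass Z x i, PcZ mass Z y i⟫ = mass i * ⟪a C, b C⟫ := by
      intro C hC i hi
      have hxC : PcZ mass Z x i = a C := by
        rw [PcZ]
        rw [Finset.sum_eq_single_of_mem C hC]
        · simp [hi, ha]
        · intro C' hC' hne
          rw [if_neg]
          intro hiC'
          exact hne (Z.eq_of_mem_parts hC' hC hiC' hi)
      have hyC : PcZ mass Z y i = b C := by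
        rw [PcZ]
        rw [Finset.sum_eq_single_of_mem C hC]
        · simp [hi, hb]
        · intro C' hC' hne
          rw [if_neg]
          intro hiC'
          exact hne (Z.eq_of_mem_parts hC' hC hiC' hi)
      rw [hxC, hyC]
    calc ∑ i, mass i * ⟪PcZ mass Z x i, PcZ mass Z y i⟫
        = ∑ C ∈ Z.parts, ∑ i ∈ C, mass i * ⟪PcZ mass Z x i, PcZ mass Z y i⟫ :=
          (sum_parts_eq Z _).symm
      _ = ∑ C ∈ Z.parts, ∑ i ∈ C, mass i * ⟪a C, b C⟫ :=
          Finset.sum_congr rfl fun C hC => Finset.sum_congr rfl (step C hC)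
      _ = S := by
          refine Finset.sum_congr rfl fun C hC => ?_
          rw [← Finset.sum_mul]
          rfl
  -- RHS double sum = 2 M S
  have hRHS : ∑ C₁ ∈ Z.parts, ∑ C₂ ∈ Z.parts,
      w C₁ * w C₂ * ⟪a C₁ - a C₂, b C₁ - b C₂⟫ = 2 * M * S := by
    have expand : ∑ C₁ ∈ Z.parts, ∑ C₂ ∈ Z.parts,
        w C₁ * w C₂ * ⟪a C₁ - a C₂, b C₁ - b C₂⟫
      = ∑ C₁ ∈ Z.parts, ∑ C₂ ∈ Z.parts,
        (w C₂ * (w C₁ * ⟪a C₁, b C₁⟫) + w C₁ * (w C₂ * ⟪a C₂, b C₂⟫)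
          - w C₁ * (w C₂ * ⟪a C₁, b C₂⟫) - w C₂ * (w C₁ * ⟪a C₂, b C₁⟫)) := by
      refine Finset.sum_congr rfl fun C₁ _ => Finset.sum_congr rfl fun C₂ _ => ?_
      rw [inner_sub_left, inner_sub_right, inner_sub_right]
      ring
    rw [expand]
    simp only [Finset.sum_sub_distrib, Finset.sum_add_distrib]
    have t1 : ∑ C₁ ∈ Z.parts, ∑ C₂ ∈ Z.parts, w C₂ * (w C₁ * ⟪a C₁, b C₁⟫) = M * S := by
      rw [Finset.sum_comm]
      calc ∑ C₂ ∈ Z.parts, ∑ C₁ ∈ Z.parts, w C₂ * (w C₁ * ⟪a C₁, b C₁⟫)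
          = ∑ C₂ ∈ Z.parts, w C₂ * S := by
            refine Finset.sum_congr rfl fun C₂ _ => ?_
            rw [← Finset.mul_sum]
        _ = M * S := by rw [← Finset.sum_mul, hwM]
    have t2 : ∑ C₁ ∈ Z.parts, ∑ C₂ ∈ Z.parts, w C₁ * (w C₂ * ⟪a C₂, b C₂⟫) = M * S := by
      calc ∑ C₁ ∈ Z.parts, ∑ C₂ ∈ Z.parts, w C₁ * (w C₂ * ⟪a C₂, b C₂⟫)
          = ∑ C₁ ∈ Z.parts, w C₁ * S := by
            refine Finset.sum_congr rfl fun C₁ _ => ?_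
            rw [← Finset.mul_sum]
        _ = M * S := by rw [← Finset.sum_mul, hwM]
    have t3 : ∑ C₁ ∈ Z.parts, ∑ C₂ ∈ Z.parts, w C₁ * (w C₂ * ⟪a C₁, b C₂⟫) = 0 := by
      refine Finset.sum_eq_zero fun C₁ _ => ?_
      rw [← Finset.mul_sum, keyy (a C₁), mul_zero]
    have t4 : ∑ C₁ ∈ Z.parts, ∑ C₂ ∈ Z.parts, w C₂ * (w C₁ * ⟪a C₂, b C₁⟫) = 0 := by
      rw [Finset.sum_comm]
      refine Finset.sum_eq_zero fun C₂ _ => ?_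
      have : ∑ C₁ ∈ Z.parts, w C₂ * (w C₁ * ⟪a C₂, b C₁⟫)
          = w C₂ * ∑ C₁ ∈ Z.parts, w C₁ * ⟪a C₂, b C₁⟫ := by rw [Finset.mul_sum]
      rw [this, keyy (a C₂), mul_zero]
    rw [t1, t2, t3, t4]
    ring
  rw [hLHS, hRHS]
  field_simp
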